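/- Pointwise factorization in Fourier variables: for every ξ ∈ ℝ³ and every n ∈ S², setting ξ⁺ = ξ − 2κ(ξ·n)n and ξ⁻ = 2κ(ξ·n)n, one has M̂(ξ⁺) · M̂₁(ξ⁻) = M̂(ξ), where M̂(ξ) = exp(−i u₁·ξ − Θ#|ξ|²/(2m)) and M̂₁(ξ) = exp(−i u₁·ξ − Θ₁|ξ|²/(2m₁)) are the Fourier transforms of the Maxwellians M and M₁ respectively (complex-valued identity). -/

import Mathlib

open MeasureTheory Metric Real
open scoped RealInnerProductSpace

noncomputable section

/-- `ℝ³` as a Euclidean space. -/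
abbrev E3 := EuclideanSpace ℝ (Fin 3)

/-- The unit sphere `S² ⊂ ℝ³`. -/
abbrev Sph := Metric.sphere (0 : E3) 1

/-- The Fourier transform of the Maxwellian with mass `mm`, temperature `Θ` and bulk
velocity `u`: `ξ ↦ exp(-i u·ξ - Θ|ξ|²/(2 mm))`. -/
noncomputable def maxwellianFT (mm Θ : ℝ) (u : E3) (ξ : E3) : ℂ :=
  Complex.exp (-(Complex.I * ((⟪u, ξ⟫ : ℝ) : ℂ)) - ((Θ * ‖ξ‖ ^ 2 / (2 * mm) : ℝ) : ℂ))

/-!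
Both Fourier transforms share the phase `exp(-i u₁·ξ)`, which is multiplicative since
`ξ⁺ + ξ⁻ = ξ`, so everything reduces to the Gaussian exponents. With `t = ξ·n` one has
`|ξ⁺|² = |ξ|² - 4κ(1-κ)t²` and `|ξ⁻|² = 4κ²t²`, so the exponents add up exactly when
`Θ#(1-κ)m₁ = κΘ₁m`; unfolding `Θ#` and `κ`, this is the mass identity `(1-α)m₁ = αm`.
-/

section GaussianExponent

variable {F : Type*} [NormedAddCommGroup F] [InnerProductSpace ℝ F]

theorem norm_smul_sq_of_norm_eq_one {n : F} (hn : ‖n‖ = 1) (c : ℝ) :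
    ‖c • n‖ ^ 2 = c ^ 2 := by
  rw [norm_smul, hn, mul_one, Real.norm_eq_abs, sq_abs]

theorem norm_sub_smul_sq_of_norm_eq_one {n : F} (hn : ‖n‖ = 1) (ξ : F) (c : ℝ) :
    ‖ξ - c • n‖ ^ 2 = ‖ξ‖ ^ 2 - 2 * c * ⟪ξ, n⟫ + c ^ 2 := by
  rw [norm_sub_sq_real, real_inner_smul_right, norm_smul_sq_of_norm_eq_one hn]
  ring

theorem gaussian_exponent_split {n : F} (hn : ‖n‖ = 1) {m m₁ κ Θ Θ₁ : ℝ}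
    (hm : m ≠ 0) (hm₁ : m₁ ≠ 0) (hbal : Θ * (1 - κ) * m₁ = κ * Θ₁ * m) (ξ : F) :
    Θ * ‖ξ - (2 * κ * ⟪ξ, n⟫) • n‖ ^ 2 / (2 * m) +
        Θ₁ * ‖(2 * κ * ⟪ξ, n⟫) • n‖ ^ 2 / (2 * m₁) =
      Θ * ‖ξ‖ ^ 2 / (2 * m) := by
  rw [norm_sub_smul_sq_of_norm_eq_one hn, norm_smul_sq_of_norm_eq_one hn]
  field_simp
  linear_combination (-4 * κ * ⟪ξ, n⟫ ^ 2) * hbal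

end GaussianExponent

theorem maxwellianFT_sub_mul_maxwellianFT {m m' m'' Θ Θ' Θ'' : ℝ} {u ξ η : E3}
    (h : Θ * ‖ξ - η‖ ^ 2 / (2 * m) + Θ' * ‖η‖ ^ 2 / (2 * m') = Θ'' * ‖ξ‖ ^ 2 / (2 * m'')) :
    maxwellianFT m Θ u (ξ - η) * maxwellianFT m' Θ' u η = maxwellianFT m'' Θ'' u ξ := by
  unfold maxwellianFT
  rw [← Complex.exp_add, ← h, inner_sub_right]
  push_cast
  ring_nf

theorem temperature_balance {m m₁ e Θ₁ α β κ Θs : ℝ} (hm : 0 < m) (hm₁ : 0 < m₁) (he : e < 1)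
    (hα : α = m₁ / (m + m₁)) (hβ : β = (1 - e) / 2) (hκ : κ = α * (1 - β))
    (hΘs : Θs = (1 - α) * (1 - β) * Θ₁ / (1 - κ)) :
    Θs * (1 - κ) * m₁ = κ * Θ₁ * m := by
  have hα₀ : 0 < α := by rw [hα]; positivity
  have hα₁ : α < 1 := by rw [hα, div_lt_one (by positivity)]; linarith
  have hκ₁ : κ < 1 := by
    rw [hκ, hβ]
    nlinarith
  have hmass : (1 - α) * m₁ = α * m := by
    rw [hα]
    field_simp
    ring
  rw [hΘs, div_mul_cancel₀ _ (sub_ne_zero.mpr hκ₁.ne'), hκ]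
  linear_combination (1 - β) * Θ₁ * hmass

theorem maxwellianFT_factorization_general
    (m m1 e Θ1 : ℝ) (u1 : E3)
    (hm : 0 < m) (hm1 : 0 < m1) (he : e ∈ Set.Ioo (0 : ℝ) 1)
    (α β κ Θs : ℝ)
    (hα : α = m1 / (m + m1)) (hβ : β = (1 - e) / 2) (hκ : κ = α * (1 - β))
    (hΘs : Θs = (1 - α) * (1 - β) * Θ1 / (1 - α * (1 - β)))
    (ξ : E3) (n : Sph) :
    maxwellianFT m Θs u1 (ξ - (2 * κ * ⟪ξ, (n : E3)⟫) • (n : E3)) *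
        maxwellianFT m1 Θ1 u1 ((2 * κ * ⟪ξ, (n : E3)⟫) • (n : E3)) =
      maxwellianFT m Θs u1 ξ := by
  have hn : ‖(n : E3)‖ = 1 := norm_eq_of_mem_sphere n
  have hbal : Θs * (1 - κ) * m1 = κ * Θ1 * m :=
    temperature_balance hm hm1 he.2 hα hβ hκ (hκ ▸ hΘs)
  exact maxwellianFT_sub_mul_maxwellianFT (gaussian_exponent_split hn hm.ne' hm1.ne' hbal ξ)

/-- Pointwise factorization in Fourier variables: for every `ξ ∈ ℝ³` and
`n ∈ S²`, with `ξ⁺ = ξ - 2κ(ξ·n)n` and `ξ⁻ = 2κ(ξ·n)n`, one has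
`M̂(ξ⁺) M̂₁(ξ⁻) = M̂(ξ)`. -/
theorem maxwellianFT_factorization
    (m m1 e Θ1 : ℝ) (u1 : E3)
    (hm : 0 < m) (hm1 : 0 < m1) (he : e ∈ Set.Ioo (0 : ℝ) 1) (hΘ1 : 0 < Θ1)
    (α β κ Θs : ℝ)
    (hα : α = m1 / (m + m1)) (hβ : β = (1 - e) / 2) (hκ : κ = α * (1 - β))
    (hΘs : Θs = (1 - α) * (1 - β) * Θ1 / (1 - α * (1 - β)))
    (ξ : E3) (n : Sph) :
    maxwellianFT m Θs u1 (ξ - (2 * κ * ⟪ξ, (n : E3)⟫) • (n : E3)) *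
        maxwellianFT m1 Θ1 u1 ((2 * κ * ⟪ξ, (n : E3)⟫) • (n : E3)) =
      maxwellianFT m Θs u1 ξ :=
  maxwellianFT_factorization_general m m1 e Θ1 u1 hm hm1 he α β κ Θs hα hβ hκ hΘs ξ n
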